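/- arXiv:0901.1266 — 2 statements merged into one kernel-verified Lean document; each statement's English description precedes it below -/
import Mathlib

section
/- For every triple of real numbers (a₀, a₁, a₂) with (a₀, a₁, a₂) ≠ (0, 0, 0), the set {x ∈ ℝ : a₀ + a₁·v₁(x) + a₂·v₂(x) = 0} has at most two elements; equivalently, every line in the plane intersects the likelihood-ratio curve {(v₁(x), v₂(x)) : x ∈ ℝ} in at most two points. -/
noncomputable def D (x : ℝ) : ℝ := 1 + Real.exp (-x - 1/2) + Real.exp (x - 1/2)
noncomputable def v₁ (x : ℝ) : ℝ := Real.exp (-x - 1/2) / D x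
noncomputable def v₂ (x : ℝ) : ℝ := Real.exp (x - 1/2) / D x

lemma quad_encard (A B C : ℝ) (h : ¬ (A = 0 ∧ B = 0 ∧ C = 0)) :
    Set.encard {t : ℝ | A * t ^ 2 + B * t + C = 0} ≤ 2 := by
  by_cases hA : A = 0
  · by_cases hB : B = 0
    · have hC : C ≠ 0 := by tauto
      have : {t : ℝ | A * t ^ 2 + B * t + C = 0} = ∅ := by
        ext t; simp [hA, hB, hC]
      simp [this]
    · have : {t : ℝ | A * t ^ 2 + B * t + C = 0} ⊆ {-C / B} := by
        intro t ht
        simp only [Set.mem_setOf_eq, hA, zero_mul, zero_add] at ht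
        simp only [Set.mem_singleton_iff]
        field_simp
        linarith
      calc Set.encard {t : ℝ | A * t ^ 2 + B * t + C = 0} ≤ Set.encard {-C / B} :=
            Set.encard_mono this
        _ ≤ 2 := by simp
  · set d := B ^ 2 - 4 * A * C with hd
    have hsub : {t : ℝ | A * t ^ 2 + B * t + C = 0} ⊆
        {(Real.sqrt d - B) / (2 * A), (-Real.sqrt d - B) / (2 * A)} := by
      intro t ht
      simp only [Set.mem_setOf_eq] at ht
      have hsq : (2 * A * t + B) ^ 2 = d := by rw [hd]; linear_combination 4 * A * ht
      have habs : Real.sqrt d = |2 * A * t + B| := by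
        rw [← hsq, Real.sqrt_sq_eq_abs]
      rcases abs_cases (2 * A * t + B) with ⟨he, _⟩ | ⟨he, _⟩
      · left
        rw [habs, he]
        field_simp
        ring
      · right
        rw [habs, he]
        rw [Set.mem_singleton_iff, eq_div_iff (mul_ne_zero two_ne_zero hA)]
        ring
    calc Set.encard {t : ℝ | A * t ^ 2 + B * t + C = 0}
        ≤ Set.encard {(Real.sqrt d - B) / (2 * A), (-Real.sqrt d - B) / (2 * A)} :=
          Set.encard_mono hsub
      _ ≤ 2 := by
          apply (Set.encard_insert_le _ _).trans
          simp
          exact le_of_eq one_add_one_eq_two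

theorem line_meets_curve_in_at_most_two_points
    (a₀ a₁ a₂ : ℝ) (h : (a₀, a₁, a₂) ≠ (0, 0, 0)) :
    Set.encard {x : ℝ | a₀ + a₁ * v₁ x + a₂ * v₂ x = 0} ≤ 2 := by
  set c := Real.exp (-(1/2) : ℝ) with hc
  have hcpos : 0 < c := Real.exp_pos _
  have hne : ¬ ((a₀ + a₂) * c = 0 ∧ a₀ = 0 ∧ (a₀ + a₁) * c = 0) := by
    rintro ⟨hA, hB, hC⟩
    apply h
    have h2 : a₂ = 0 := by
      rcases mul_eq_zero.mp hA with h' | h'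
      · linarith
      · exact absurd h' hcpos.ne'
    have h1 : a₁ = 0 := by
      rcases mul_eq_zero.mp hC with h' | h'
      · linarith
      · exact absurd h' hcpos.ne'
    simp [hB, h1, h2]
  have hmaps : Real.exp '' {x : ℝ | a₀ + a₁ * v₁ x + a₂ * v₂ x = 0} ⊆
      {t : ℝ | (a₀ + a₂) * c * t ^ 2 + a₀ * t + (a₀ + a₁) * c = 0} := by
    rintro _ ⟨x, hx, rfl⟩
    simp only [Set.mem_setOf_eq, v₁, v₂, D] at hx ⊢
    have hE : (0:ℝ) < Real.exp x := Real.exp_pos x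
    have e1 : Real.exp (-x - 1/2) = c / Real.exp x := by
      rw [hc, show (-x - 1/2 : ℝ) = (-(1/2)) - x by ring, Real.exp_sub]
    have e2 : Real.exp (x - 1/2) = c * Real.exp x := by
      rw [hc, show (x - 1/2 : ℝ) = x + (-(1/2)) by ring, Real.exp_add]; ring
    rw [e1, e2] at hx
    have hD2 : (0:ℝ) < 1 + c / Real.exp x + c * Real.exp x := by positivity
    field_simp at hx
    nlinarith [hx, hE, hcpos]
  calc Set.encard {x : ℝ | a₀ + a₁ * v₁ x + a₂ * v₂ x = 0}
      = Set.encard (Real.exp '' {x : ℝ | a₀ + a₁ * v₁ x + a₂ * v₂ x = 0}) :=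
        (Real.exp_injective.encard_image _).symm
    _ ≤ Set.encard {t : ℝ | (a₀ + a₂) * c * t ^ 2 + a₀ * t + (a₀ + a₁) * c = 0} :=
        Set.encard_mono hmaps
    _ ≤ 2 := quad_encard _ _ _ hne
end

section
/- The likelihood-ratio curve x ↦ (v₁(x), v₂(x)) has everywhere nonvanishing curvature, so that no three of its points are collinear; quantitatively, for all real numbers x₁ < x₂ < x₃ one has the strict chord inequality v₂(x₂)·(v₁(x₁) − v₁(x₃)) < v₂(x₁)·(v₁(x₂) − v₁(x₃)) + v₂(x₃)·(v₁(x₁) − v₁(x₂)); that is, viewed as the graph of v₂ as a function of v₁, the curve is strictly convex, and in particular every straight line meets it in at most two points. -/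
theorem curve_strict_chord_inequality
    (x₁ x₂ x₃ : ℝ) (h₁₂ : x₁ < x₂) (h₂₃ : x₂ < x₃) :
    v₂ x₂ * (v₁ x₁ - v₁ x₃) <
      v₂ x₁ * (v₁ x₂ - v₁ x₃) + v₂ x₃ * (v₁ x₁ - v₁ x₂) := by
  have hD : ∀ x : ℝ, 0 < D x := by
    intro x; unfold D; positivity
  have h1 := hD x₁
  have h2 := hD x₂
  have h3 := hD x₃
  set s := Real.exp (x₂ - x₁) with hsdef
  set t := Real.exp (x₃ - x₂) with htdef
  have hs : (1:ℝ) < s := by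
    rw [hsdef, show (1:ℝ) = Real.exp 0 from Real.exp_zero.symm]
    exact Real.exp_lt_exp.mpr (by linarith)
  have ht : (1:ℝ) < t := by
    rw [htdef, show (1:ℝ) = Real.exp 0 from Real.exp_zero.symm]
    exact Real.exp_lt_exp.mpr (by linarith)
  have e1 : Real.exp (-x₁ - 1/2) * Real.exp (x₂ - 1/2) = s * Real.exp (-1) := by
    rw [hsdef, ← Real.exp_add, ← Real.exp_add]; ring_nf
  have e2 : Real.exp (-x₂ - 1/2) * Real.exp (x₃ - 1/2) = t * Real.exp (-1) := by
    rw [htdef, ← Real.exp_add, ← Real.exp_add]; ring_nf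
  have e3 : Real.exp (-x₁ - 1/2) * Real.exp (x₃ - 1/2) = s * t * Real.exp (-1) := by
    rw [hsdef, htdef, ← Real.exp_add, ← Real.exp_add, ← Real.exp_add]; ring_nf
  have e4 : Real.exp (-x₂ - 1/2) * Real.exp (x₁ - 1/2) * s = Real.exp (-1) := by
    rw [hsdef, ← Real.exp_add, ← Real.exp_add]; ring_nf
  have e5 : Real.exp (-x₃ - 1/2) * Real.exp (x₂ - 1/2) * t = Real.exp (-1) := by
    rw [htdef, ← Real.exp_add, ← Real.exp_add]; ring_nf
  have e6 : Real.exp (-x₃ - 1/2) * Real.exp (x₁ - 1/2) * (s * t) = Real.exp (-1) := by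
    rw [hsdef, htdef, ← Real.exp_add, ← Real.exp_add, ← Real.exp_add]; ring_nf
  have hs0 : (0:ℝ) < s := by linarith
  have ht0 : (0:ℝ) < t := by linarith
  have hst0 : (0:ℝ) < s * t := mul_pos hs0 ht0
  have hE : (0:ℝ) < Real.exp (-1) := Real.exp_pos _
  -- key inequality: a₁b₂ + a₃b₁ + a₂b₃ < a₂b₁ + a₁b₃ + a₃b₂
  have key : Real.exp (-x₁ - 1/2) * Real.exp (x₂ - 1/2)
      + Real.exp (-x₃ - 1/2) * Real.exp (x₁ - 1/2)
      + Real.exp (-x₂ - 1/2) * Real.exp (x₃ - 1/2)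
      < Real.exp (-x₂ - 1/2) * Real.exp (x₁ - 1/2)
      + Real.exp (-x₁ - 1/2) * Real.exp (x₃ - 1/2)
      + Real.exp (-x₃ - 1/2) * Real.exp (x₂ - 1/2) := by
    have h1st : (1:ℝ) < s * t := by nlinarith
    have hfac : (0:ℝ) < (s - 1) * (t - 1) * (s * t - 1) :=
      mul_pos (mul_pos (by linarith) (by linarith)) (by linarith)
    have l4 : Real.exp (-x₂ - 1/2) * Real.exp (x₁ - 1/2) = Real.exp (-1) / s := by
      rw [eq_div_iff (ne_of_gt hs0)]; exact e4
    have l5 : Real.exp (-x₃ - 1/2) * Real.exp (x₂ - 1/2) = Real.exp (-1) / t := by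
      rw [eq_div_iff (ne_of_gt ht0)]; exact e5
    have l6 : Real.exp (-x₃ - 1/2) * Real.exp (x₁ - 1/2) = Real.exp (-1) / (s * t) := by
      rw [eq_div_iff (ne_of_gt hst0)]; exact e6
    rw [e1, e2, e3, l4, l5, l6, ← mul_lt_mul_iff_left₀ hst0]
    have hexp : Real.exp (-1) / (s * t) * (s * t) = Real.exp (-1) := by
      field_simp
    have h7 : Real.exp (-1) / s * (s * t) = Real.exp (-1) * t := by
      field_simp
    have h8 : Real.exp (-1) / t * (s * t) = Real.exp (-1) * s := by
      field_simp
    rw [add_mul, add_mul, add_mul, add_mul, hexp, h7, h8]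
    nlinarith [mul_pos hE hfac]
  -- rewrite both sides over the common denominator
  have hprod : (0:ℝ) < D x₁ * D x₂ * D x₃ := by positivity
  have eqL : v₂ x₂ * (v₁ x₁ - v₁ x₃)
      = (Real.exp (x₂ - 1/2) * (Real.exp (-x₁ - 1/2) * D x₃ - Real.exp (-x₃ - 1/2) * D x₁))
        / (D x₁ * D x₂ * D x₃) := by
    unfold v₁ v₂; field_simp
  have eqR : v₂ x₁ * (v₁ x₂ - v₁ x₃) + v₂ x₃ * (v₁ x₁ - v₁ x₂)
      = (Real.exp (x₁ - 1/2) * (Real.exp (-x₂ - 1/2) * D x₃ - Real.exp (-x₃ - 1/2) * D x₂)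
        + Real.exp (x₃ - 1/2) * (Real.exp (-x₁ - 1/2) * D x₂ - Real.exp (-x₂ - 1/2) * D x₁))
        / (D x₁ * D x₂ * D x₃) := by
    unfold v₁ v₂; field_simp
  have main : Real.exp (x₂ - 1/2) * (Real.exp (-x₁ - 1/2) * D x₃ - Real.exp (-x₃ - 1/2) * D x₁)
      < Real.exp (x₁ - 1/2) * (Real.exp (-x₂ - 1/2) * D x₃ - Real.exp (-x₃ - 1/2) * D x₂)
        + Real.exp (x₃ - 1/2) * (Real.exp (-x₁ - 1/2) * D x₂ - Real.exp (-x₂ - 1/2) * D x₁) := by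
    unfold D
    linarith [key]
  rw [eqL, eqR]
  exact div_lt_div_of_pos_right main hprod
end
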